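/- Let X be a separable complex Banach space with the metric approximation property. Then the set of all T ∈ 𝔅₁(X) such that 0 belongs to the approximate point spectrum of T is a dense G_δ subset of (𝔅₁(X), SOT). In particular, a typical T ∈ (𝔅₁(X), SOT) is non-invertible. -/

import Mathlib

open Topology Filter

noncomputable section

variable (X : Type*) [NormedAddCommGroup X] [NormedSpace ℂ X]

/-- The closed unit ball of the space of bounded linear operators on `X`. -/
abbrev Ball1 : Type _ := {T : X →L[ℂ] X // ‖T‖ ≤ 1}

/-- The strong operator topology on the unit ball: the topology of pointwise
norm-convergence of operators. -/
def sot : TopologicalSpace (Ball1 X) :=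
  TopologicalSpace.induced (fun T => (T.1 : X → X)) inferInstance

/-- The approximate point spectrum of `T`: the set of `λ ∈ ℂ` such that `T - λ`
is not bounded below. -/
def apSpectrum (T : X →L[ℂ] X) : Set ℂ :=
  {l | ¬ ∃ c > 0, ∀ x : X, c * ‖x‖ ≤ ‖T x - l • x‖}

/-- `X` has the metric approximation property: for every compact `K ⊆ X` and every
`ε > 0`, there is a finite rank operator `R` with `‖R‖ ≤ 1` and `‖R x - x‖ < ε`
for all `x ∈ K`. -/
def HasMetricApproximationProperty : Prop :=
  ∀ K : Set X, IsCompact K → ∀ ε : ℝ, 0 < ε →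
    ∃ R : X →L[ℂ] X, FiniteDimensional ℂ (LinearMap.range (R : X →ₗ[ℂ] X)) ∧
      ‖R‖ ≤ 1 ∧ ∀ x ∈ K, ‖R x - x‖ < ε

end

/-- Let `X` be a separable (infinite-dimensional) complex Banach space with the metric
approximation property. Then the set of `T ∈ 𝔅₁(X)` with `0` in the approximate point
spectrum of `T` is a dense `G_δ` subset of `(𝔅₁(X), SOT)`. In particular, a typical
`T ∈ (𝔅₁(X), SOT)` is non-invertible. -/
theorem typical_contraction_zero_in_apSpectrum
    (X : Type*) [NormedAddCommGroup X] [NormedSpace ℂ X] [CompleteSpace X]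
    [TopologicalSpace.SeparableSpace X]
    (hdim : ¬ FiniteDimensional ℂ X)
    (hMAP : HasMetricApproximationProperty X) :
    (@Dense _ (sot X) {T : Ball1 X | (0 : ℂ) ∈ apSpectrum X T.1} ∧
      @IsGδ _ (sot X) {T : Ball1 X | (0 : ℂ) ∈ apSpectrum X T.1}) ∧
    {T : Ball1 X | ¬ IsUnit T.1} ∈ @residual _ (sot X) := by

  classical
  letI : TopologicalSpace (Ball1 X) := sot X
  haveI : Nontrivial X := by
    by_contra h
    rw [not_nontrivial_iff_subsingleton] at h
    haveI := h; exact hdim inferInstance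
  -- characterization of membership
  have hA : ∀ T : Ball1 X, T ∈ {T : Ball1 X | (0 : ℂ) ∈ apSpectrum X T.1} ↔
      ¬ ∃ c > 0, ∀ x : X, c * ‖x‖ ≤ ‖T.1 x‖ := by
    intro T
    simp [apSpectrum]
  -- continuity of evaluations
  have hcont : ∀ x : X, Continuous fun T : Ball1 X => ‖T.1 x‖ := by
    intro x
    have h1 : Continuous fun T : Ball1 X => (T.1 : X → X) := continuous_induced_dom
    exact continuous_norm.comp ((continuous_apply x).comp h1)
  set U : ℕ → Set (Ball1 X) :=
    fun n => {T : Ball1 X | ∃ x : X, ‖T.1 x‖ < (1 / (n + 1)) * ‖x‖} with hUdef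
  have hUopen : ∀ n, IsOpen (U n) := by
    intro n
    have : U n = ⋃ x : X, {T : Ball1 X | ‖T.1 x‖ < (1 / (n + 1)) * ‖x‖} := by
      ext T; simp [hUdef, Set.mem_iUnion]
    rw [this]
    exact isOpen_iUnion fun x => isOpen_lt (hcont x) continuous_const
  have hAeq : {T : Ball1 X | (0 : ℂ) ∈ apSpectrum X T.1} = ⋂ n : ℕ, U n := by
    ext T
    rw [hA T, Set.mem_iInter]
    constructor
    · intro h n
      push_neg at h
      rcases h (1 / (n + 1)) (by positivity) with ⟨x, hx⟩
      exact ⟨x, hx⟩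
    · rintro h ⟨c, hc, hbd⟩
      obtain ⟨n, hn⟩ := exists_nat_one_div_lt hc
      obtain ⟨x, hx⟩ := h n
      have h1 := hbd x
      nlinarith [norm_nonneg x, norm_nonneg (T.1 x)]
  have hGδ : IsGδ {T : Ball1 X | (0 : ℂ) ∈ apSpectrum X T.1} := by
    rw [hAeq]
    exact IsGδ.iInter_of_isOpen hUopen
  have hDense : Dense {T : Ball1 X | (0 : ℂ) ∈ apSpectrum X T.1} := by
    rw [dense_iff_inter_open]
    rintro W hW ⟨T, hT⟩
    change IsOpen[TopologicalSpace.induced (fun T : Ball1 X => (T.1 : X → X)) inferInstance] W at hW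
    rw [isOpen_induced_iff] at hW
    obtain ⟨V, hV, rfl⟩ := hW
    obtain ⟨I, u, hu, hpi⟩ := isOpen_pi_iff.1 hV _ hT
    have hδ : ∀ i : X, ∃ δ : ℝ, 0 < δ ∧ (i ∈ I → Metric.ball (T.1 i) δ ⊆ u i) := by
      intro i
      by_cases hi : i ∈ I
      · obtain ⟨δ, hδ0, hδb⟩ := Metric.isOpen_iff.1 (hu i hi).1 _ (hu i hi).2
        exact ⟨δ, hδ0, fun _ => hδb⟩
      · exact ⟨1, one_pos, fun h => absurd h hi⟩
    choose δ hδ0 hδball using hδ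
    set ε : ℝ := if h : I.Nonempty then I.inf' h δ else 1 with hε
    have hε0 : 0 < ε := by
      rw [hε]; split_ifs with h
      · exact (Finset.lt_inf'_iff h).2 fun i _ => hδ0 i
      · exact one_pos
    have hεle : ∀ i ∈ I, ε ≤ δ i := by
      intro i hi
      rw [hε, dif_pos ⟨i, hi⟩]
      exact Finset.inf'_le _ hi
    obtain ⟨R, hRfin, hR1, hRnear⟩ :=
      hMAP (T.1 '' ↑I) ((I.finite_toSet.image _).isCompact) ε hε0
    set T' : X →L[ℂ] X := R.comp T.1 with hT'def
    have hT'norm : ‖T'‖ ≤ 1 := by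
      refine le_trans (ContinuousLinearMap.opNorm_comp_le _ _) ?_
      nlinarith [norm_nonneg R, norm_nonneg T.1, T.2]
    refine ⟨⟨T', hT'norm⟩, ?_, ?_⟩
    · show (fun x => T' x) ∈ V
      apply hpi
      intro i hi
      have hkey : ‖R (T.1 i) - T.1 i‖ < ε := hRnear _ ⟨i, hi, rfl⟩
      apply hδball i hi
      rw [Metric.mem_ball, dist_eq_norm]
      exact lt_of_lt_of_le hkey (hεle i hi)
    · have hninj : ¬ Function.Injective (T' : X →ₗ[ℂ] X) := by
        intro hinj
        have hle : LinearMap.range (T' : X →ₗ[ℂ] X) ≤ LinearMap.range (R : X →ₗ[ℂ] X) := by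
          rintro y ⟨x, rfl⟩
          exact ⟨T.1 x, rfl⟩
        haveI := hRfin
        haveI : FiniteDimensional ℂ (LinearMap.range (T' : X →ₗ[ℂ] X)) :=
          Submodule.finiteDimensional_of_le hle
        exact hdim (LinearEquiv.finiteDimensional
          (LinearEquiv.ofInjective (T' : X →ₗ[ℂ] X) hinj).symm)
      rw [Function.not_injective_iff] at hninj
      obtain ⟨a, b, hab, hne⟩ := hninj
      rw [Set.mem_setOf_eq]
      show (0 : ℂ) ∈ apSpectrum X T'
      rintro ⟨c, hc, hbd⟩
      have hz : T' (a - b) = 0 := by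
        have : T' a = T' b := hab
        rw [map_sub, this, sub_self]
      have h1 := hbd (a - b)
      rw [zero_smul, sub_zero, hz, norm_zero] at h1
      have h0 : 0 < ‖a - b‖ := by
        rw [norm_pos_iff, sub_ne_zero]; exact hne
      nlinarith
  refine ⟨⟨hDense, hGδ⟩, ?_⟩
  refine Filter.mem_of_superset (residual_of_dense_Gδ hGδ hDense) ?_
  intro T hT
  rw [Set.mem_setOf_eq] at hT ⊢
  intro hunit
  apply hT
  obtain ⟨v, hv⟩ := hunit
  set S : X →L[ℂ] X := ↑v⁻¹ with hSdef
  have key : ∀ x : X, S (T.1 x) = x := by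
    intro x
    have h1 : S * T.1 = 1 := by rw [hSdef, ← hv]; exact v.inv_mul
    have : (S * T.1) x = (1 : X →L[ℂ] X) x := by rw [h1]
    simpa using this
  have hbound : ∀ x : X, ‖x‖ ≤ ‖S‖ * ‖T.1 x‖ := by
    intro x
    calc ‖x‖ = ‖S (T.1 x)‖ := by rw [key x]
      _ ≤ ‖S‖ * ‖T.1 x‖ := S.le_opNorm _
  have hS0 : 0 < ‖S‖ := by
    obtain ⟨x0, hx0⟩ := exists_ne (0 : X)
    have h1 := hbound x0
    have h2 : 0 < ‖x0‖ := norm_pos_iff.2 hx0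
    nlinarith [norm_nonneg S, norm_nonneg (T.1 x0)]
  refine ⟨‖S‖⁻¹, inv_pos.2 hS0, ?_⟩
  intro x
  rw [zero_smul, sub_zero]
  rw [inv_mul_le_iff₀ hS0]
  exact hbound x
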